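/- arXiv:2506.09318 — 5 statements merged into one kernel-verified Lean document; each statement's English description precedes it below -/
import Mathlib

section
/- Let M ≥ 2 be an even natural number. Then for every k ∈ {1,…,M}, Σ_{j=0}^{M−1} u_j(0)·u_j(s_k) = (1/M)·(−1)^{k+M/2}·tan((2k−1)π/(2M)), where u_j are the normalized Chebyshev polynomials and s_k are the Chebyshev nodes of order M. -/
/-!
Write `s_k = cos θ` with `θ = (2k-1)π/(2M) ∈ (0, π)`, so that `u_j(0) u_j(s_k)` is a multiple of
`cos (jπ/2) cos (jθ)`: odd terms vanish and the even term `j = 2n` carries the sign `(-1)^n`.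
After multiplication by `cos θ` the sum telescopes to `±cos ((M-1)θ)`, and `Mθ = kπ - π/2` turns
this into `±sin θ`. As `sin θ > 0`, this also shows `cos θ ≠ 0`, and dividing gives `tan θ`.
-/

/-- The `k`-th Chebyshev node of order `M`: `s_k = cos((2k-1)π/(2M))`. -/
noncomputable def chebNode (M k : ℕ) : ℝ :=
  Real.cos ((2 * (k : ℝ) - 1) * Real.pi / (2 * (M : ℝ)))

/-- The normalized Chebyshev polynomials: `u_0(s) = √(1/M) T_0(s)` and
`u_j(s) = √(2/M) T_j(s)` for `j ≥ 1`, where `T_j(s) = cos(j arccos s)`. -/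
noncomputable def chebU (M j : ℕ) (s : ℝ) : ℝ :=
  (if j = 0 then Real.sqrt (1 / (M : ℝ)) else Real.sqrt (2 / (M : ℝ))) *
    Real.cos ((j : ℝ) * Real.arccos s)

open Finset Real

lemma chebU_mul_chebU (M j : ℕ) (a b : ℝ) :
    chebU M j a * chebU M j b =
      (if j = 0 then 1 else 2) / M * (cos (j * arccos a) * cos (j * arccos b)) := by
  have hsq : ∀ c : ℝ, 0 ≤ c → √c * cos (j * arccos a) * (√c * cos (j * arccos b)) =
      c * (cos (j * arccos a) * cos (j * arccos b)) := fun c hc => by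
    linear_combination (cos (j * arccos a) * cos (j * arccos b)) * Real.mul_self_sqrt hc
  unfold chebU
  split_ifs <;> rw [hsq _ (by positivity)]

lemma chebNode_angle_mem_Ioo {M k : ℕ} (hk : 1 ≤ k) (hkM : k ≤ M) :
    (2 * (k : ℝ) - 1) * π / (2 * M) ∈ Set.Ioo 0 π := by
  have hk' : (1 : ℝ) ≤ k := by exact_mod_cast hk
  have hkM' : (k : ℝ) ≤ M := by exact_mod_cast hkM
  constructor
  · exact div_pos (by nlinarith [pi_pos]) (by linarith)
  · rw [div_lt_iff₀ (by linarith)]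
    nlinarith [pi_pos]

-- Telescopes by `2 cos θ cos (2nθ) = cos ((2n+1)θ) + cos ((2n-1)θ)`; odd `j` contribute nothing.
lemma cos_mul_sum_cos_mul_pi_div_two_mul_cos (θ : ℝ) {N : ℕ} (hN : 1 ≤ N) :
    cos θ * ∑ j ∈ range (2 * N), (if j = 0 then 1 else 2) * (cos (j * (π / 2)) * cos (j * θ)) =
      -(-1) ^ N * cos ((2 * N - 1) * θ) := by
  induction N, hN using Nat.le_induction with
  | base => norm_num [sum_range_succ]
  | succ n hn ih =>
    have hcos_even : cos ((2 * n : ℕ) * (π / 2)) = (-1) ^ n := by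
      rw [← cos_nat_mul_pi]; push_cast; ring_nf
    have hcos_odd : cos ((2 * n + 1 : ℕ) * (π / 2)) = 0 := by
      rw [show ((2 * n + 1 : ℕ) : ℝ) * (π / 2) = π / 2 + n * π by push_cast; ring,
        cos_add_nat_mul_pi, cos_pi_div_two, mul_zero]
    rw [show 2 * (n + 1) = 2 * n + 1 + 1 by ring, sum_range_succ, sum_range_succ, mul_add,
      mul_add, ih, hcos_even, hcos_odd, if_neg (by omega)]
    push_cast
    rw [show (2 * (n : ℝ) - 1) * θ = 2 * n * θ - θ by ring,
      show (2 * ((n : ℝ) + 1) - 1) * θ = 2 * n * θ + θ by ring, cos_sub, cos_add]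
    ring

lemma cos_two_mul_sub_one_mul_eq {N k : ℕ} {θ : ℝ} (h : 2 * N * θ = k * π - π / 2) :
    cos ((2 * N - 1) * θ) = -(-1) ^ k * sin θ := by
  rw [show (2 * (N : ℝ) - 1) * θ = k * π - (π / 2 + θ) by linarith, cos_nat_mul_pi_sub,
    cos_add, cos_pi_div_two, sin_pi_div_two]
  ring

open Finset in
theorem stmt_6_general (M : ℕ) (hMe : Even M) (k : ℕ) (hk : k ∈ Finset.Icc 1 M) :
    (∑ j ∈ Finset.range M, chebU M j 0 * chebU M j (chebNode M k)) =
      (1 / (M : ℝ)) * (-1 : ℝ) ^ (k + M / 2) *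
        Real.tan ((2 * (k : ℝ) - 1) * Real.pi / (2 * (M : ℝ))) := by
  obtain ⟨hk1, hkM⟩ := mem_Icc.mp hk
  obtain ⟨N, rfl⟩ := hMe.two_dvd
  set θ := (2 * (k : ℝ) - 1) * π / (2 * (2 * N : ℕ)) with hθ
  obtain ⟨hθ0, hθπ⟩ := chebNode_angle_mem_Ioo hk1 hkM
  have hterm (j : ℕ) : chebU (2 * N) j 0 * chebU (2 * N) j (chebNode (2 * N) k) =
      1 / (2 * N : ℕ) * ((if j = 0 then 1 else 2) * (cos (j * (π / 2)) * cos (j * θ))) := by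
    rw [chebU_mul_chebU, arccos_zero, chebNode, ← hθ, arccos_cos hθ0.le hθπ.le]
    ring
  have hNθ : 2 * (N : ℝ) * θ = k * π - π / 2 := by
    have hN0 : (N : ℝ) ≠ 0 := by norm_cast; omega
    rw [hθ]
    field_simp
    push_cast
    ring
  have hsum := cos_mul_sum_cos_mul_pi_div_two_mul_cos θ (N := N) (by omega)
  rw [cos_two_mul_sub_one_mul_eq hNθ] at hsum
  have hcos : cos θ ≠ 0 := fun h => by
    have hsin : sin θ = 0 := by simpa [h] using hsum
    exact (sin_pos_of_pos_of_lt_pi hθ0 hθπ).ne' hsin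
  rw [sum_congr rfl fun j _ => hterm j, ← mul_sum, tan_eq_sin_div_cos,
    Nat.mul_div_cancel_left N two_pos, mul_assoc, pow_add]
  congr 1
  rw [mul_div_assoc', eq_div_iff hcos]
  linear_combination hsum

open Finset in
/-- Closed form of the Chebyshev interpolation weights at `0`:
`∑_{j=0}^{M-1} u_j(0) u_j(s_k) = (1/M) (-1)^{k+M/2} tan((2k-1)π/(2M))` for even `M`. -/
theorem stmt_6 (M : ℕ) (hM : 2 ≤ M) (hMe : Even M) (k : ℕ) (hk : k ∈ Finset.Icc 1 M) :
    (∑ j ∈ Finset.range M, chebU M j 0 * chebU M j (chebNode M k)) =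
      (1 / (M : ℝ)) * (-1 : ℝ) ^ (k + M / 2) *
        Real.tan ((2 * (k : ℝ) - 1) * Real.pi / (2 * (M : ℝ))) :=
  stmt_6_general M hMe k hk
end

section
/- Let M ≥ 2 be an even natural number, let s_k = cos((2k−1)π/(2M)) for k ∈ {1,…,M} be the Chebyshev nodes, and define d_k = (1/M)·(−1)^{k+M/2}·tan((2k−1)π/(2M)). Then for any function f : ℝ → ℂ, the unique polynomial P of degree at most M−1 satisfying P(s_k) = f(s_k) for all k ∈ {1,…,M} satisfies P(0) = Σ_{k=1}^{M} d_k · f(s_k). -/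
/-- The Chebyshev interpolation weight for evaluation at `0`:
`d_k = (1/M) (-1)^{k+M/2} tan((2k-1)π/(2M))`. -/
noncomputable def chebWeight (M k : ℕ) : ℝ :=
  (1 / (M : ℝ)) * (-1 : ℝ) ^ (k + M / 2) *
    Real.tan ((2 * (k : ℝ) - 1) * Real.pi / (2 * (M : ℝ)))

/-!
For even `M` the Chebyshev nodes `s_k = cos θ_k` are exactly the `M` simple roots of `T_M`, so the
barycentric form of Lagrange interpolation, written with `T_M` in place of the nodal polynomial,
gives `P(0) = ∑ T_M(0) / (T_M'(s_k) (0 - s_k)) f(s_k)`. Here `T_M(0) = (-1)^(M/2)` and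
`T_M'(s_k) sin θ_k = M sin (M θ_k) = -M (-1)^k`, since `M θ_k = kπ - π/2`.
-/

open Finset Polynomial Polynomial.Chebyshev Real

namespace Lagrange

variable {F ι : Type*} [Field F] {s : Finset ι} {v : ι → F}

theorem eq_C_leadingCoeff_mul_nodal (hvs : Set.InjOn v s) {Q : F[X]} (hQ : Q.degree = #s)
    (hroot : ∀ i ∈ s, Q.eval (v i) = 0) : Q = C Q.leadingCoeff * nodal s v := by
  have hQ0 : Q ≠ 0 := by rintro rfl; simp at hQ
  have hdeg : (C Q.leadingCoeff * nodal s v).degree = #s := by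
    rw [degree_C_mul (leadingCoeff_ne_zero.mpr hQ0), degree_nodal]
  have hlc : (C Q.leadingCoeff * nodal s v).leadingCoeff = Q.leadingCoeff := by
    rw [leadingCoeff_mul, leadingCoeff_C, nodal_monic.leadingCoeff, mul_one]
  refine eq_of_degree_sub_lt_of_eval_index_eq s hvs ?_ fun i hi ↦ ?_
  · rw [← hQ]
    exact degree_sub_lt_left (hQ.trans hdeg.symm) hQ0 hlc.symm
  · rw [hroot i hi, eval_mul, eval_nodal_at_node hi, mul_zero]

theorem eval_eq_sum_div_derivative [DecidableEq ι] (hvs : Set.InjOn v s) {Q : F[X]}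
    (hQ : Q.degree = #s) (hroot : ∀ i ∈ s, Q.eval (v i) = 0) {P : F[X]} (hP : P.degree < #s)
    {x : F} (hx : ∀ i ∈ s, x ≠ v i) :
    P.eval x = ∑ i ∈ s, Q.eval x / ((derivative Q).eval (v i) * (x - v i)) * P.eval (v i) := by
  have hQ0 : Q.leadingCoeff ≠ 0 := leadingCoeff_ne_zero.mpr (by rintro rfl; simp at hQ)
  rw [eq_interpolate hvs hP, eval_interpolate_not_at_node _ hx, mul_sum]
  refine sum_congr rfl fun i hi ↦ ?_
  rw [nodalWeight_eq_eval_derivative_nodal hi, eq_C_leadingCoeff_mul_nodal hvs hQ hroot,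
    derivative_C_mul, eval_mul, eval_mul, eval_C, eval_C, eval_interpolate_at_node _ hvs hi]
  field_simp

end Lagrange

theorem complex_ofReal_eval_derivative_T (x : ℝ) (n : ℤ) :
    (((derivative (T ℝ n)).eval x : ℝ) : ℂ) = (derivative (T ℂ n)).eval (x : ℂ) := by
  rw [← map_T Complex.ofRealHom, derivative_map, eval_map]
  exact (eval₂_at_apply Complex.ofRealHom x).symm

noncomputable def chebAngle (M k : ℕ) : ℝ := (2 * (k : ℝ) - 1) * π / (2 * M)

theorem chebNode_eq_cos_chebAngle (M k : ℕ) : chebNode M k = cos (chebAngle M k) := rfl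

theorem natCast_mul_chebAngle {M : ℕ} (hM : M ≠ 0) (k : ℕ) :
    M * chebAngle M k = k * π - π / 2 := by
  unfold chebAngle
  field_simp

section

variable {M k : ℕ}

theorem chebAngle_mem_Ioo (hk : k ∈ Icc 1 M) : chebAngle M k ∈ Set.Ioo 0 π := by
  obtain ⟨hk1, hkM⟩ := mem_Icc.mp hk
  have hk1' : (1 : ℝ) ≤ k := by exact_mod_cast hk1
  have hkM' : (k : ℝ) ≤ M := by exact_mod_cast hkM
  unfold chebAngle
  constructor
  · apply div_pos <;> nlinarith [pi_pos]
  · rw [div_lt_iff₀ (by linarith)]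
    nlinarith [pi_pos]

theorem chebNode_injOn : Set.InjOn (chebNode M) (Icc 1 M) := by
  intro k hk l hl hkl
  have h := injOn_cos (Set.Ioo_subset_Icc_self (chebAngle_mem_Ioo hk))
    (Set.Ioo_subset_Icc_self (chebAngle_mem_Ioo hl)) hkl
  have hM : (M : ℝ) ≠ 0 := Nat.cast_ne_zero.mpr (by grind)
  unfold chebAngle at h
  field_simp at h
  exact_mod_cast (by linarith : (k : ℝ) = l)

theorem chebNode_ne_zero (hM : Even M) (hk : k ∈ Icc 1 M) : chebNode M k ≠ 0 := by
  intro h0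
  have h := injOn_cos (Set.Ioo_subset_Icc_self (chebAngle_mem_Ioo hk))
    ⟨by positivity, by linarith [pi_pos]⟩ (h0.trans cos_pi_div_two.symm)
  have hM0 : (M : ℝ) ≠ 0 := Nat.cast_ne_zero.mpr (by grind)
  unfold chebAngle at h
  field_simp at h
  have : 2 * k = M + 1 := by exact_mod_cast (by linarith : 2 * (k : ℝ) = M + 1)
  grind

theorem eval_T_chebNode (hk : k ∈ Icc 1 M) : (T ℝ M).eval (chebNode M k) = 0 := by
  rw [chebNode_eq_cos_chebAngle, T_real_cos, Int.cast_natCast,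
    natCast_mul_chebAngle (by grind), cos_nat_mul_pi_sub, cos_pi_div_two, mul_zero]

theorem eval_derivative_T_chebNode_mul_sin (hk : k ∈ Icc 1 M) :
    (derivative (T ℝ M)).eval (chebNode M k) * sin (chebAngle M k) = -(M * (-1) ^ k) := by
  rw [T_derivative_eq_U, eval_mul, mul_assoc, chebNode_eq_cos_chebAngle, U_real_cos]
  push_cast
  rw [sub_add_cancel, natCast_mul_chebAngle (by grind), sin_nat_mul_pi_sub, sin_pi_div_two]
  simp

theorem T_natCast_eval_zero_of_even {R : Type*} [CommRing R] (hM : Even M) :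
    (T R M).eval 0 = (-1) ^ (M / 2) := by
  rw [T_eval_zero_of_even (R := R) (n := M) (by exact_mod_cast hM)]
  obtain ⟨m, rfl⟩ := hM
  rw [show ((m + m : ℕ) : ℤ) / 2 = m by omega, show (m + m) / 2 = m by omega]
  simp

theorem chebWeight_eq (hM : Even M) (hk : k ∈ Icc 1 M) :
    chebWeight M k =
      (T ℝ M).eval 0 / ((derivative (T ℝ M)).eval (chebNode M k) * (0 - chebNode M k)) := by
  have hsin : sin (chebAngle M k) ≠ 0 :=
    (sin_pos_of_pos_of_lt_pi (chebAngle_mem_Ioo hk).1 (chebAngle_mem_Ioo hk).2).ne'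
  have hcos : cos (chebAngle M k) ≠ 0 := chebNode_ne_zero hM hk
  have hM0 : (M : ℝ) ≠ 0 := Nat.cast_ne_zero.mpr (by grind)
  rw [T_natCast_eval_zero_of_even hM, eq_div_of_mul_eq hsin (eval_derivative_T_chebNode_mul_sin hk),
    chebNode_eq_cos_chebAngle]
  change 1 / (M : ℝ) * (-1) ^ (k + M / 2) * tan (chebAngle M k) = _
  rw [tan_eq_sin_div_cos, pow_add]
  rcases neg_one_pow_eq_or ℝ k with h | h <;> rw [h] <;> field_simp <;> ring

end

open Finset in
theorem stmt_7_general (M : ℕ) (hMe : Even M) (f : ℝ → ℂ)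
    (P : Polynomial ℂ) (hdeg : P.degree < M)
    (hP : ∀ k ∈ Finset.Icc 1 M, P.eval ((chebNode M k : ℝ) : ℂ) = f (chebNode M k)) :
    P.eval 0 = ∑ k ∈ Finset.Icc 1 M, (chebWeight M k : ℂ) * f (chebNode M k) := by
  have hinj : Set.InjOn (fun k ↦ (chebNode M k : ℂ)) (Icc 1 M) :=
    Complex.ofReal_injective.comp_injOn chebNode_injOn
  have hcard : #(Icc 1 M) = M := by simp
  have hroot : ∀ k ∈ Icc 1 M, (T ℂ M).eval (chebNode M k : ℂ) = 0 := fun k hk ↦ by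
    rw [← complex_ofReal_eval_T, eval_T_chebNode hk, Complex.ofReal_zero]
  have hne : ∀ k ∈ Icc 1 M, (0 : ℂ) ≠ chebNode M k := fun k hk ↦ by
    exact_mod_cast (chebNode_ne_zero hMe hk).symm
  rw [Lagrange.eval_eq_sum_div_derivative hinj (by simp [hcard]) hroot (by rwa [hcard]) hne]
  refine sum_congr rfl fun k hk ↦ ?_
  rw [hP k hk, chebWeight_eq hMe hk]
  push_cast [complex_ofReal_eval_T, complex_ofReal_eval_derivative_T]
  rfl

open Finset in
/-- Evaluation at `0` of the Chebyshev interpolant: any polynomial `P` of degree at most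
`M - 1` agreeing with `f` at the `M` Chebyshev nodes satisfies
`P(0) = ∑_{k=1}^M d_k f(s_k)`. -/
theorem stmt_7 (M : ℕ) (hM : 2 ≤ M) (hMe : Even M) (f : ℝ → ℂ)
    (P : Polynomial ℂ) (hdeg : P.degree < M)
    (hP : ∀ k ∈ Finset.Icc 1 M, P.eval ((chebNode M k : ℝ) : ℂ) = f (chebNode M k)) :
    P.eval 0 = ∑ k ∈ Finset.Icc 1 M, (chebWeight M k : ℂ) * f (chebNode M k) :=
  stmt_7_general M hMe f P hdeg hP
end

section
/- Let H be an N×N Hermitian complex matrix, let L be an arbitrary N×N complex matrix, and let β ≥ 0. Then |Tr(exp(−β(H + L)))| ≤ e^{β‖L‖} · Tr(exp(−βH)), where ‖L‖ denotes the operator (spectral) norm of L and exp is the matrix exponential. -/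
/-!
Triangularize `A = -β(H + L)` by a unitary `U` (Schur). Then `Tr exp A = ∑ᵢ exp Tᵢᵢ` with
`Tᵢᵢ = ⟪uᵢ, A uᵢ⟫` for the orthonormal columns `uᵢ` of `U`, so
`|Tr exp A| ≤ ∑ᵢ exp (Re Tᵢᵢ) ≤ e^{β‖L‖} ∑ᵢ exp (-β ⟪uᵢ, H uᵢ⟫)`.
Against an eigenbasis `wⱼ` of `H` the weights `|⟪wⱼ, uᵢ⟫|²` form a doubly stochastic matrix and
`⟪uᵢ, H uᵢ⟫ = ∑ⱼ |⟪wⱼ, uᵢ⟫|² λⱼ`, so Jensen's inequality bounds the last sum by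
`∑ⱼ exp (-β λⱼ) = Tr exp (-βH)`.
-/

open scoped Matrix.Norms.L2Operator InnerProductSpace
open Module Matrix

/-- Schur triangulation. The flag is built from the front: an eigenvector `u` of `f†` spans a line
whose orthogonal complement is `f`-invariant. -/
theorem LinearMap.exists_orthonormal_inner_apply_eq_zero_of_lt {E : Type*} [NormedAddCommGroup E]
    [InnerProductSpace ℂ E] {n : ℕ} (hn : finrank ℂ E = n) (f : E →ₗ[ℂ] E) :
    ∃ b : Fin n → E, Orthonormal ℂ b ∧ ∀ i j, i < j → ⟪b i, f (b j)⟫_ℂ = 0 := by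
  induction n generalizing E with
  | zero => exact ⟨Fin.elim0, ⟨fun i => i.elim0, fun i => i.elim0⟩, fun i => i.elim0⟩
  | succ n ih =>
    have : Fact (finrank ℂ E = n + 1) := ⟨hn⟩
    have : FiniteDimensional ℂ E := .of_fact_finrank_eq_succ n
    have : Nontrivial E := nontrivial_of_finrank_eq_succ hn
    obtain ⟨μ, hμ⟩ := Module.End.exists_eigenvalue (LinearMap.adjoint f)
    obtain ⟨v, hv⟩ := hμ.exists_hasEigenvector
    set u := (‖v‖⁻¹ : ℂ) • v
    have hu : ‖u‖ = 1 := norm_smul_inv_norm hv.2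
    have hfu : ∀ x, ⟪u, f x⟫_ℂ = starRingEnd ℂ μ * ⟪u, x⟫_ℂ := fun x => by
      rw [← LinearMap.adjoint_inner_left, map_smul, hv.apply_eq_smul, smul_comm, inner_smul_left]
    set K := (ℂ ∙ u)ᗮ
    have hK : ∀ x ∈ K, f x ∈ K := fun x hx => by
      rw [Submodule.mem_orthogonal_singleton_iff_inner_right] at hx ⊢
      rw [hfu, hx, mul_zero]
    have hKu : ∀ x : K, ⟪u, (x : E)⟫_ℂ = 0 := fun x =>
      Submodule.mem_orthogonal_singleton_iff_inner_right.mp x.2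
    obtain ⟨b, hb, htri⟩ := ih (E := K)
      (Submodule.finrank_orthogonal_span_singleton (norm_ne_zero_iff.mp (by simp [hu])))
      (f.restrict hK)
    refine ⟨Matrix.vecCons u fun i => (b i : E),
      orthonormal_vecCons_iff.mpr ⟨hu, fun i => hKu (b i), hb.comp_linearIsometry K.subtypeₗᵢ⟩, ?_⟩
    intro i j hij
    induction j using Fin.cases with
    | zero => exact absurd hij (Fin.not_lt_zero i)
    | succ j =>
      induction i using Fin.cases with
      | zero => simp [hfu, hKu]
      | succ i => simpa using htri i j (Fin.succ_lt_succ_iff.mp hij)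

variable {n : Type*} [Fintype n] [DecidableEq n] {𝕜 : Type*} [RCLike 𝕜]

namespace Matrix

theorem conjTranspose_mul_mul_apply_eq_inner (b : n → EuclideanSpace 𝕜 n) (A : Matrix n n 𝕜)
    (i j : n) :
    ((of fun k l => b l k)ᴴ * A * of fun k l => b l k) i j = ⟪b i, toEuclideanLin A (b j)⟫_𝕜 := by
  rw [mul_mul_apply, EuclideanSpace.inner_eq_star_dotProduct, dotProduct_comm]
  rfl

theorem of_mem_unitaryGroup_of_orthonormal {b : n → EuclideanSpace 𝕜 n} (hb : Orthonormal 𝕜 b) :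
    (of fun k l => b l k) ∈ unitaryGroup n 𝕜 := by
  rw [mem_unitaryGroup_iff', star_eq_conjTranspose]
  ext i j
  simpa [orthonormal_iff_ite.mp hb, one_apply] using conjTranspose_mul_mul_apply_eq_inner b 1 i j

theorem exists_mem_unitaryGroup_isLowerTriangular {N : ℕ} (A : Matrix (Fin N) (Fin N) ℂ) :
    ∃ U ∈ unitaryGroup (Fin N) ℂ, (Uᴴ * A * U).IsLowerTriangular := by
  obtain ⟨b, hb, htri⟩ := LinearMap.exists_orthonormal_inner_apply_eq_zero_of_lt
    finrank_euclideanSpace_fin (toEuclideanLin A)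
  exact ⟨_, of_mem_unitaryGroup_of_orthonormal hb, fun i j hij =>
    (conjTranspose_mul_mul_apply_eq_inner b A i j).trans (htri i j hij)⟩

section LowerTriangular

variable {m : Type*} [Fintype m] [LinearOrder m]

theorem IsLowerTriangular.mul_apply_self {R : Type*} [Semiring R] {M M' : Matrix m m R}
    (hM : M.IsLowerTriangular) (hM' : M'.IsLowerTriangular) (i : m) :
    (M * M') i i = M i i * M' i i := by
  rw [mul_apply]
  refine Finset.sum_eq_single i (fun j _ hji => ?_) (by simp)
  rcases hji.lt_or_gt with hji | hij
  · rw [hM' hji, mul_zero]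
  · rw [hM hij, zero_mul]

theorem IsLowerTriangular.pow_apply_self [DecidableEq m] {R : Type*} [Semiring R]
    {M : Matrix m m R} (hM : M.IsLowerTriangular) (k : ℕ) (i : m) : (M ^ k) i i = M i i ^ k := by
  induction k with
  | zero => simp
  | succ k ih => rw [pow_succ, IsLowerTriangular.mul_apply_self (hM.pow k) hM, ih, pow_succ]

theorem IsLowerTriangular.exp_apply_self [DecidableEq m] {M : Matrix m m 𝕜}
    (hM : M.IsLowerTriangular) (i : m) : NormedSpace.exp M i i = NormedSpace.exp (M i i) := by
  have h := Pi.hasSum.mp (Pi.hasSum.mp (NormedSpace.exp_series_hasSum_exp' (𝕂 := 𝕜) M) i) i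
  simp only [Matrix.smul_apply, hM.pow_apply_self] at h
  exact h.unique (NormedSpace.exp_series_hasSum_exp' _)

theorem IsLowerTriangular.trace_exp [DecidableEq m] {M : Matrix m m 𝕜}
    (hM : M.IsLowerTriangular) : trace (NormedSpace.exp M) = ∑ i, NormedSpace.exp (M i i) :=
  Finset.sum_congr rfl fun i _ => hM.exp_apply_self i

end LowerTriangular

theorem trace_exp_conjTranspose_mul_mul {U : Matrix n n 𝕜} (hU : U ∈ unitaryGroup n 𝕜)
    (A : Matrix n n 𝕜) : trace (NormedSpace.exp (Uᴴ * A * U)) = trace (NormedSpace.exp A) := by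
  have hUU : Uᴴ * U = 1 := Unitary.star_mul_self_of_mem hU
  have hunit : IsUnit U := (Unitary.toUnits ⟨U, hU⟩).isUnit
  rw [← inv_eq_left_inv hUU, exp_conj' U A hunit, trace_conj' hunit]

theorem norm_apply_le_l2_opNorm (A : Matrix n n 𝕜) (i j : n) : ‖A i j‖ ≤ ‖A‖ := by
  simpa using (PiLp.norm_apply_le _ i).trans (A.l2_opNorm_mulVec (EuclideanSpace.single j 1))

theorem norm_conjTranspose_mul_mul_apply_le {U : Matrix n n 𝕜} (hU : U ∈ unitaryGroup n 𝕜)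
    (A : Matrix n n 𝕜) (i j : n) : ‖(Uᴴ * A * U) i j‖ ≤ ‖A‖ := by
  refine (norm_apply_le_l2_opNorm _ i j).trans_eq ?_
  rw [CStarRing.norm_mul_mem_unitary _ hU, ← star_eq_conjTranspose,
    CStarRing.norm_mem_unitary_mul _ (Unitary.star_mem hU)]

theorem sum_norm_sq_apply_of_mem_unitaryGroup {V : Matrix n n 𝕜} (hV : V ∈ unitaryGroup n 𝕜)
    (i : n) : ∑ j, ‖V i j‖ ^ 2 = 1 := by
  have h := congr_fun₂ (mem_unitaryGroup_iff.mp hV) i i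
  simp only [mul_apply, star_apply, one_apply_eq, ← starRingEnd_apply, RCLike.mul_conj] at h
  exact_mod_cast h

theorem norm_sq_mem_doublyStochastic {V : Matrix n n 𝕜} (hV : V ∈ unitaryGroup n 𝕜) :
    (of fun i j => ‖V i j‖ ^ 2) ∈ doublyStochastic ℝ n := by
  refine mem_doublyStochastic_iff_sum.mpr ⟨fun i j => sq_nonneg ‖V i j‖,
    sum_norm_sq_apply_of_mem_unitaryGroup hV, fun j => ?_⟩
  simpa using sum_norm_sq_apply_of_mem_unitaryGroup (Unitary.star_mem hV) j

theorem re_conjTranspose_mul_diagonal_mul_apply_self (V : Matrix n n 𝕜) (d : n → ℝ) (i : n) :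
    RCLike.re ((Vᴴ * diagonal (RCLike.ofReal ∘ d : n → 𝕜) * V) i i) = ∑ j, ‖V j i‖ ^ 2 * d j := by
  simp only [mul_apply, diagonal_apply, conjTranspose_apply, RCLike.star_def, mul_ite, mul_zero,
    Finset.sum_ite_eq', Finset.mem_univ, if_true, Function.comp_apply]
  refine (map_sum _ _ _).trans (Finset.sum_congr rfl fun j _ => ?_)
  rw [mul_right_comm, RCLike.conj_mul, ← RCLike.ofReal_pow, ← RCLike.ofReal_mul, RCLike.ofReal_re]

end Matrix

theorem ConvexOn.sum_comp_mulVec_le {s : Set ℝ} {f : ℝ → ℝ} (hf : ConvexOn ℝ s f)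
    {M : Matrix n n ℝ} (hM : M ∈ doublyStochastic ℝ n) {x : n → ℝ} (hx : ∀ j, x j ∈ s) :
    ∑ i, f ((M *ᵥ x) i) ≤ ∑ j, f (x j) :=
  calc ∑ i, f ((M *ᵥ x) i)
      ≤ ∑ i, ∑ j, M i j * f (x j) := Finset.sum_le_sum fun i _ =>
        hf.map_sum_le (fun j _ => nonneg_of_mem_doublyStochastic hM)
          (sum_row_of_mem_doublyStochastic hM i) fun j _ => hx j
    _ = ∑ j, f (x j) := by
      rw [Finset.sum_comm]
      simp [← Finset.sum_mul, sum_col_of_mem_doublyStochastic hM]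

namespace Matrix.IsHermitian

variable {H : Matrix n n 𝕜}

theorem trace_exp_smul (hH : H.IsHermitian) (c : 𝕜) :
    trace (NormedSpace.exp (c • H)) = ∑ j, NormedSpace.exp (c * hH.eigenvalues j) := by
  set W : Matrix n n 𝕜 := (hH.eigenvectorUnitary : Matrix n n 𝕜)
  have hW : Wᴴ ∈ unitaryGroup n 𝕜 := Unitary.star_mem hH.eigenvectorUnitary.2
  have hD : diagonal (fun j => c * hH.eigenvalues j) =
      c • diagonal (RCLike.ofReal ∘ hH.eigenvalues) := by
    rw [← diagonal_smul]
    rfl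
  have hcH : c • H = Wᴴᴴ * diagonal (fun j => c * hH.eigenvalues j) * Wᴴ := by
    conv_lhs => rw [hH.spectral_theorem]
    rw [conjTranspose_conjTranspose, hD, Matrix.mul_smul, Matrix.smul_mul,
      Unitary.conjStarAlgAut_apply, star_eq_conjTranspose]
  rw [hcH, trace_exp_conjTranspose_mul_mul hW, exp_diagonal, trace_diagonal]
  simp

/-- Peierls' inequality: the diagonal of `H` in any orthonormal basis is majorized by its
spectrum. -/
theorem sum_convexOn_diag_conj_le (hH : H.IsHermitian) {U : Matrix n n 𝕜}
    (hU : U ∈ unitaryGroup n 𝕜) {f : ℝ → ℝ} (hf : ConvexOn ℝ Set.univ f) :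
    ∑ i, f (RCLike.re ((Uᴴ * H * U) i i)) ≤ ∑ j, f (hH.eigenvalues j) := by
  set W : Matrix n n 𝕜 := (hH.eigenvectorUnitary : Matrix n n 𝕜)
  set V := Wᴴ * U
  have hV : V ∈ unitaryGroup n 𝕜 :=
    Submonoid.mul_mem _ (Unitary.star_mem hH.eigenvectorUnitary.2) hU
  have hHU : Uᴴ * H * U = Vᴴ * diagonal (RCLike.ofReal ∘ hH.eigenvalues) * V := by
    conv_lhs => rw [hH.spectral_theorem]
    simp only [Unitary.conjStarAlgAut_apply, V, W, conjTranspose_mul, conjTranspose_conjTranspose,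
      star_eq_conjTranspose, Matrix.mul_assoc]
  calc ∑ i, f (RCLike.re ((Uᴴ * H * U) i i))
      = ∑ i, f (((of fun i j => ‖Vᴴ i j‖ ^ 2) *ᵥ hH.eigenvalues) i) := by
        simp [hHU, re_conjTranspose_mul_diagonal_mul_apply_self, mulVec, dotProduct]
    _ ≤ ∑ j, f (hH.eigenvalues j) :=
        hf.sum_comp_mulVec_le (norm_sq_mem_doublyStochastic (Unitary.star_mem hV)) fun _ => trivial

end Matrix.IsHermitian

theorem Matrix.norm_trace_exp_le_sum_exp_re_diag {N : ℕ} {A U : Matrix (Fin N) (Fin N) ℂ}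
    (hU : U ∈ unitaryGroup (Fin N) ℂ) (hT : (Uᴴ * A * U).IsLowerTriangular) :
    ‖trace (NormedSpace.exp A)‖ ≤ ∑ i, Real.exp ((Uᴴ * A * U) i i).re := by
  rw [← trace_exp_conjTranspose_mul_mul hU, hT.trace_exp]
  refine (norm_sum_le _ _).trans_eq (Finset.sum_congr rfl fun i _ => ?_)
  rw [← Complex.exp_eq_exp_ℂ, Complex.norm_exp]

/-- Trace bound for a perturbed Hermitian matrix: for `H` Hermitian, `L` arbitrary and
`β ≥ 0`, `|Tr(exp(-β(H+L)))| ≤ e^{β‖L‖} Tr(exp(-βH))`, where `‖L‖` is the operator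
norm induced by the Euclidean norm. -/
theorem stmt_9 (N : ℕ) (H L : Matrix (Fin N) (Fin N) ℂ) (hH : H.IsHermitian)
    (β : ℝ) (hβ : 0 ≤ β) :
    ‖Matrix.trace (NormedSpace.exp ((-(β : ℂ)) • (H + L)))‖ ≤
      Real.exp (β * ‖L‖) * (Matrix.trace (NormedSpace.exp ((-(β : ℂ)) • H))).re := by
  obtain ⟨U, hU, hT⟩ := exists_mem_unitaryGroup_isLowerTriangular ((-(β : ℂ)) • (H + L))
  have hdiag : ∀ i, ((Uᴴ * ((-(β : ℂ)) • (H + L)) * U) i i).re ≤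
      β * ‖L‖ + -β * ((Uᴴ * H * U) i i).re := fun i => by
    have hL := (Complex.abs_re_le_norm _).trans (norm_conjTranspose_mul_mul_apply_le hU L i i)
    simp only [Matrix.mul_smul, Matrix.smul_mul, Matrix.mul_add, Matrix.add_mul, Matrix.smul_apply,
      Matrix.add_apply, smul_eq_mul, Complex.mul_re, Complex.add_re, Complex.neg_re, Complex.neg_im,
      Complex.ofReal_re, Complex.ofReal_im]
    nlinarith [abs_le.mp hL]
  have hconv : ConvexOn ℝ Set.univ fun x => Real.exp (-β * x) := by
    exact convexOn_exp.comp_linearMap ((-β) • LinearMap.id : ℝ →ₗ[ℝ] ℝ)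
  calc ‖trace (NormedSpace.exp ((-(β : ℂ)) • (H + L)))‖
      ≤ ∑ i, Real.exp ((Uᴴ * ((-(β : ℂ)) • (H + L)) * U) i i).re :=
        norm_trace_exp_le_sum_exp_re_diag hU hT
    _ ≤ ∑ i, Real.exp (β * ‖L‖) * Real.exp (-β * ((Uᴴ * H * U) i i).re) :=
        Finset.sum_le_sum fun i _ => by rw [← Real.exp_add]; exact Real.exp_le_exp.mpr (hdiag i)
    _ ≤ Real.exp (β * ‖L‖) * ∑ j, Real.exp (-β * hH.eigenvalues j) := by
        rw [← Finset.mul_sum]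
        exact mul_le_mul_of_nonneg_left (hH.sum_convexOn_diag_conj_le hU hconv) (Real.exp_nonneg _)
    _ = _ := by
        rw [hH.trace_exp_smul, Complex.re_sum]
        simp [← Complex.exp_eq_exp_ℂ, ← Complex.ofReal_neg, ← Complex.ofReal_mul,
          Complex.exp_ofReal_re]
end

section
/- Let N ≥ 1, let U be an N×N unitary complex matrix, let d ∈ ℕ, let θ, φ ∈ ℝ^{d+1} and λ ∈ ℝ. Define the 2N×2N matrices A = |0⟩⟨0| ⊗ U + |1⟩⟨1| ⊗ I_N (block-diagonal with blocks U and I_N) and, for any (θ', φ', λ'), R(θ',φ',λ') = [[e^{i(λ'+φ')}cos θ', e^{iφ'} sin θ'], [e^{iλ'} sin θ', −cos θ']] ⊗ I_N. Then there exist polynomials P, Q ∈ ℂ[x] with deg P ≤ d and deg Q ≤ d satisfying |P(x)|² + |Q(x)|² = 1 for every x ∈ ℂ with |x| = 1, such that the top-left N×N block of (∏_{j=1}^{d} R(θ_j, φ_j, 0)·A) · R(θ_0, φ_0, λ) equals P(U) and the bottom-left N×N block equals Q(U). -/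
open Matrix Kronecker

/-- The single-qubit rotation `R(θ,φ,λ)` tensored with the `N×N` identity:
`R(θ,φ,λ) = [[e^{i(λ+φ)}cos θ, e^{iφ} sin θ], [e^{iλ} sin θ, -cos θ]] ⊗ I_N`. -/
noncomputable def gqspR (N : ℕ) (θ φ lam : ℝ) : Matrix (Fin 2 × Fin N) (Fin 2 × Fin N) ℂ :=
  (!![Complex.exp (Complex.I * ((lam : ℂ) + (φ : ℂ))) * (Real.cos θ : ℂ),
      Complex.exp (Complex.I * (φ : ℂ)) * (Real.sin θ : ℂ);
      Complex.exp (Complex.I * (lam : ℂ)) * (Real.sin θ : ℂ),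
      -(Real.cos θ : ℂ)] : Matrix (Fin 2) (Fin 2) ℂ) ⊗ₖ (1 : Matrix (Fin N) (Fin N) ℂ)

/-- The anti-controlled evolution operator `A = |0⟩⟨0| ⊗ U + |1⟩⟨1| ⊗ I_N`. -/
noncomputable def gqspA (N : ℕ) (U : Matrix (Fin N) (Fin N) ℂ) :
    Matrix (Fin 2 × Fin N) (Fin 2 × Fin N) ℂ :=
  (!![1, 0; 0, 0] : Matrix (Fin 2) (Fin 2) ℂ) ⊗ₖ U +
    (!![0, 0; 0, 1] : Matrix (Fin 2) (Fin 2) ℂ) ⊗ₖ (1 : Matrix (Fin N) (Fin N) ℂ)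

/-- The interleaved GQSP circuit `(∏_{j=1}^d R(θ_j,φ_j,0) A) R(θ_0,φ_0,λ)`
(the factor with the largest index `j = d` acting first on the right of the
`j = 1, …, d` factors, and `R(θ_0,φ_0,λ)` acting first of all). -/
noncomputable def gqspCircuit (N d : ℕ) (U : Matrix (Fin N) (Fin N) ℂ)
    (θ φ : Fin (d + 1) → ℝ) (lam : ℝ) : Matrix (Fin 2 × Fin N) (Fin 2 × Fin N) ℂ :=
  (List.ofFn fun j : Fin d => gqspR N (θ j.succ) (φ j.succ) 0 * gqspA N U).prod *
    gqspR N (θ 0) (φ 0) lam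

/-- The top-left `N×N` block of a `2N×2N` block matrix. -/
def block00 (N : ℕ) (W : Matrix (Fin 2 × Fin N) (Fin 2 × Fin N) ℂ) :
    Matrix (Fin N) (Fin N) ℂ :=
  Matrix.of fun i j => W (0, i) (0, j)

/-- The bottom-left `N×N` block of a `2N×2N` block matrix. -/
def block10 (N : ℕ) (W : Matrix (Fin 2 × Fin N) (Fin 2 × Fin N) ℂ) :
    Matrix (Fin N) (Fin N) ℂ :=
  Matrix.of fun i j => W (1, i) (0, j)


/-! Multiplying by `R(θ,φ,0) A` acts on the left column of blocks `(P(U), Q(U))` as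
`(P, Q) ↦ (e^{iφ} (cos θ · X P + sin θ · Q), sin θ · X P - cos θ · Q)`. This raises the degree by
at most one, and on the unit circle, where `|x P(x)| = |P(x)|`, it is a unitary rotation of
`(x P(x), Q(x))`, so it preserves `|P|² + |Q|²`. The claim follows by induction on the number of
factors, starting from the constant blocks of `R(θ₀,φ₀,λ)`. -/

open Polynomial

lemma block00_gqspR_mul (N : ℕ) (θ φ lam : ℝ) (W : Matrix (Fin 2 × Fin N) (Fin 2 × Fin N) ℂ) :
    block00 N (gqspR N θ φ lam * W) =
      (Complex.exp (Complex.I * ((lam : ℂ) + φ)) * (Real.cos θ : ℂ)) • block00 N W +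
      (Complex.exp (Complex.I * φ) * (Real.sin θ : ℂ)) • block10 N W := by
  ext i j
  simp [block00, block10, gqspR, Matrix.mul_apply, Fintype.sum_prod_type, Matrix.one_apply]

lemma block10_gqspR_mul (N : ℕ) (θ φ lam : ℝ) (W : Matrix (Fin 2 × Fin N) (Fin 2 × Fin N) ℂ) :
    block10 N (gqspR N θ φ lam * W) =
      (Complex.exp (Complex.I * lam) * (Real.sin θ : ℂ)) • block00 N W -
      (Real.cos θ : ℂ) • block10 N W := by
  ext i j
  simp [block00, block10, gqspR, Matrix.mul_apply, Fintype.sum_prod_type, Matrix.one_apply,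
    sub_eq_add_neg]

lemma block00_gqspA_mul (N : ℕ) (U : Matrix (Fin N) (Fin N) ℂ)
    (W : Matrix (Fin 2 × Fin N) (Fin 2 × Fin N) ℂ) :
    block00 N (gqspA N U * W) = U * block00 N W := by
  ext i j
  simp [block00, gqspA, Matrix.mul_apply, Fintype.sum_prod_type, Matrix.one_apply, add_mul]

lemma block10_gqspA_mul (N : ℕ) (U : Matrix (Fin N) (Fin N) ℂ)
    (W : Matrix (Fin 2 × Fin N) (Fin 2 × Fin N) ℂ) :
    block10 N (gqspA N U * W) = block10 N W := by
  ext i j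
  simp [block10, gqspA, Matrix.mul_apply, Fintype.sum_prod_type, Matrix.one_apply, add_mul]

lemma block00_gqspR (N : ℕ) (θ φ lam : ℝ) :
    block00 N (gqspR N θ φ lam) =
      (Complex.exp (Complex.I * ((lam : ℂ) + φ)) * (Real.cos θ : ℂ)) • 1 := by
  ext i j
  simp [block00, gqspR, Matrix.one_apply]

lemma block10_gqspR (N : ℕ) (θ φ lam : ℝ) :
    block10 N (gqspR N θ φ lam) = (Complex.exp (Complex.I * lam) * (Real.sin θ : ℂ)) • 1 := by
  ext i j
  simp [block10, gqspR, Matrix.one_apply]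

lemma normSq_rotation_add_normSq_rotation {c s : ℝ} (hcs : c ^ 2 + s ^ 2 = 1) {e : ℂ}
    (he : Complex.normSq e = 1) (a b : ℂ) :
    Complex.normSq (e * (c * a + s * b)) + Complex.normSq (s * a - c * b) =
      Complex.normSq a + Complex.normSq b := by
  rw [Complex.normSq_mul, he, one_mul]
  simp only [Complex.normSq_apply, Complex.add_re, Complex.add_im, Complex.sub_re,
    Complex.sub_im, Complex.mul_re, Complex.mul_im, Complex.ofReal_re, Complex.ofReal_im]
  linear_combination (a.re ^ 2 + a.im ^ 2 + b.re ^ 2 + b.im ^ 2) * hcs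

lemma natDegree_C_mul_X_mul_add_C_mul_le {R : Type*} [Semiring R] {P Q : R[X]} {n : ℕ}
    (hP : P.natDegree ≤ n) (hQ : Q.natDegree ≤ n) (a b : R) : (C a * (X * P) + C b * Q).natDegree ≤ n + 1 := by
  refine natDegree_add_le_of_degree_le ((natDegree_C_mul_le _ _).trans ?_)
    ((natDegree_C_mul_le _ _).trans (hQ.trans n.le_succ))
  exact natDegree_mul_le_of_le natDegree_X_le hP |>.trans (by omega)

def IsGQSPBlock (N n : ℕ) (U : Matrix (Fin N) (Fin N) ℂ)
    (W : Matrix (Fin 2 × Fin N) (Fin 2 × Fin N) ℂ) : Prop :=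
  ∃ P Q : ℂ[X], P.natDegree ≤ n ∧ Q.natDegree ≤ n ∧
    (∀ x : ℂ, ‖x‖ = 1 → ‖P.eval x‖ ^ 2 + ‖Q.eval x‖ ^ 2 = 1) ∧
    block00 N W = aeval U P ∧ block10 N W = aeval U Q

lemma isGQSPBlock_gqspR (N : ℕ) (U : Matrix (Fin N) (Fin N) ℂ) (θ φ lam : ℝ) :
    IsGQSPBlock N 0 U (gqspR N θ φ lam) := by
  refine ⟨C (Complex.exp (Complex.I * ((lam : ℂ) + φ)) * (Real.cos θ : ℂ)),
    C (Complex.exp (Complex.I * lam) * (Real.sin θ : ℂ)), (natDegree_C _).le,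
    (natDegree_C _).le, fun x _ => ?_, ?_, ?_⟩
  · simp only [eval_C, norm_mul, ← Complex.ofReal_add, Complex.norm_exp_I_mul_ofReal,
      Complex.norm_real, Real.norm_eq_abs, one_mul, sq_abs, Real.cos_sq_add_sin_sq]
  · rw [block00_gqspR, aeval_C, Algebra.algebraMap_eq_smul_one]
  · rw [block10_gqspR, aeval_C, Algebra.algebraMap_eq_smul_one]

lemma IsGQSPBlock.gqspR_mul_gqspA_mul {N n : ℕ} {U : Matrix (Fin N) (Fin N) ℂ}
    {W : Matrix (Fin 2 × Fin N) (Fin 2 × Fin N) ℂ} (hW : IsGQSPBlock N n U W) (θ φ : ℝ) :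
    IsGQSPBlock N (n + 1) U (gqspR N θ φ 0 * (gqspA N U * W)) := by
  obtain ⟨P, Q, hP, hQ, hPQ, h00, h10⟩ := hW
  set e := Complex.exp (Complex.I * φ)
  set c : ℂ := (Real.cos θ : ℂ)
  set s : ℂ := (Real.sin θ : ℂ)
  refine ⟨C e * (C c * (X * P) + C s * Q), C s * (X * P) + C (-c) * Q,
    (natDegree_C_mul_le _ _).trans (natDegree_C_mul_X_mul_add_C_mul_le hP hQ _ _),
    natDegree_C_mul_X_mul_add_C_mul_le hP hQ _ _, fun x hx => ?_, ?_, ?_⟩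
  · have he : Complex.normSq e = 1 := by
      rw [← Complex.sq_norm, Complex.norm_exp_I_mul_ofReal, one_pow]
    have hx' : Complex.normSq x = 1 := by rw [← Complex.sq_norm, hx, one_pow]
    simp only [eval_mul, eval_add, eval_C, eval_X, Complex.sq_norm, neg_mul, ← sub_eq_add_neg]
    rw [normSq_rotation_add_normSq_rotation (Real.cos_sq_add_sin_sq θ) he, Complex.normSq_mul, hx',
      one_mul, ← Complex.sq_norm, ← Complex.sq_norm, hPQ x hx]
  · rw [block00_gqspR_mul, block00_gqspA_mul, block10_gqspA_mul, h00, h10]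
    simp only [map_mul, map_add, aeval_C, aeval_X, Algebra.algebraMap_eq_smul_one, smul_mul_assoc,
      one_mul, smul_add, smul_smul, Complex.ofReal_zero, zero_add]
    rfl
  · rw [block10_gqspR_mul, block00_gqspA_mul, block10_gqspA_mul, h00, h10]
    simp only [map_mul, map_add, aeval_C, aeval_X, Algebra.algebraMap_eq_smul_one, smul_mul_assoc,
      one_mul, neg_mul, neg_smul, sub_eq_add_neg, Complex.ofReal_zero, mul_zero, Complex.exp_zero]
    rfl

lemma IsGQSPBlock.list_prod_mul {N n : ℕ} {U : Matrix (Fin N) (Fin N) ℂ}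
    {W : Matrix (Fin 2 × Fin N) (Fin 2 × Fin N) ℂ} (hW : IsGQSPBlock N n U W)
    (L : List (Matrix (Fin 2 × Fin N) (Fin 2 × Fin N) ℂ))
    (hL : ∀ M ∈ L, ∃ θ φ : ℝ, M = gqspR N θ φ 0 * gqspA N U) :
    IsGQSPBlock N (n + L.length) U (L.prod * W) := by
  induction L with
  | nil => simpa using hW
  | cons M L ih =>
    obtain ⟨θ, φ, rfl⟩ := hL M List.mem_cons_self
    have hLW := ih fun M hM => hL M (List.mem_cons_of_mem _ hM)
    simpa only [List.prod_cons, List.length_cons, mul_assoc, ← add_assoc]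
      using hLW.gqspR_mul_gqspA_mul θ φ

theorem stmt_11_general (N : ℕ) (U : Matrix (Fin N) (Fin N) ℂ)
    (d : ℕ)
    (θ φ : Fin (d + 1) → ℝ) (lam : ℝ) :
    ∃ P Q : Polynomial ℂ, P.natDegree ≤ d ∧ Q.natDegree ≤ d ∧
      (∀ x : ℂ, ‖x‖ = 1 →
        ‖P.eval x‖ ^ 2 + ‖Q.eval x‖ ^ 2 = 1) ∧
      block00 N (gqspCircuit N d U θ φ lam) = Polynomial.aeval U P ∧
      block10 N (gqspCircuit N d U θ φ lam) = Polynomial.aeval U Q := by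
  have h := (isGQSPBlock_gqspR N U (θ 0) (φ 0) lam).list_prod_mul
    (List.ofFn fun j : Fin d => gqspR N (θ j.succ) (φ j.succ) 0 * gqspA N U)
    (List.forall_mem_ofFn_iff.2 fun j => ⟨_, _, rfl⟩)
  rwa [List.length_ofFn, zero_add] at h

/-- Generalized Quantum Signal Processing, forward direction: the GQSP circuit built
from any angles implements polynomials `P(U)` and `Q(U)` of degree at most `d` with
`|P(x)|² + |Q(x)|² = 1` on the unit circle. -/
theorem stmt_11 (N : ℕ) (hN : 1 ≤ N) (U : Matrix (Fin N) (Fin N) ℂ)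
    (hU : U ∈ Matrix.unitaryGroup (Fin N) ℂ) (d : ℕ)
    (θ φ : Fin (d + 1) → ℝ) (lam : ℝ) :
    ∃ P Q : Polynomial ℂ, P.natDegree ≤ d ∧ Q.natDegree ≤ d ∧
      (∀ x : ℂ, ‖x‖ = 1 →
        ‖P.eval x‖ ^ 2 + ‖Q.eval x‖ ^ 2 = 1) ∧
      block00 N (gqspCircuit N d U θ φ lam) = Polynomial.aeval U P ∧
      block10 N (gqspCircuit N d U θ φ lam) = Polynomial.aeval U Q :=
  stmt_11_general N U d θ φ lam
end

section
/- Let P ∈ ℂ[x] be a polynomial of degree d such that |P(x)|² ≤ 1 for every x ∈ ℂ with |x| = 1. Then there exists a polynomial Q ∈ ℂ[x] with deg Q ≤ d such that |P(x)|² + |Q(x)|² = 1 for every x ∈ ℂ with |x| = 1. -/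
/-!
`T = 1 - |P|²` is a nonnegative trigonometric polynomial of degree `d = deg P`; on the unit circle
`z ^ d T(z)` agrees with the polynomial `z ^ d - P(z) P*(z)`, where `P*` is `P` with conjugated
coefficients reflected in degree `d`. The Fejér–Riesz theorem then writes `T = |Q|²` with
`deg Q ≤ d`. It is proved by induction on `d`, peeling off roots of `A(z) = z ^ d T(z)`: since `T`
is real, `A` is self-reciprocal, so its nonzero roots come in pairs `r, 1 / r̄`, a root on the
circle being at least double because `T ≥ 0` attains its minimum there; and on the circle
`-r̄ (z - r) (z - 1 / r̄) = z |z - r|²`, so each pair splits off a factor `|z - r|²` of `T`.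
-/

open Polynomial ComplexConjugate
open scoped ComplexOrder

lemma HasDerivAt.eq_zero_of_forall_nonneg {F : ℝ → ℂ} {F' : ℂ} {x : ℝ}
    (hF : HasDerivAt F F' x) (hx : F x = 0) (hnn : ∀ y, 0 ≤ F y) : F' = 0 := by
  have hre : HasDerivAt (fun y => (F y).re) F'.re x :=
    Complex.reCLM.hasFDerivAt.comp_hasDerivAt x hF
  have him : HasDerivAt (fun y => (F y).im) F'.im x :=
    Complex.imCLM.hasFDerivAt.comp_hasDerivAt x hF
  have hmin : IsLocalMin (fun y => (F y).re) x := Filter.Eventually.of_forall fun y => by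
    simpa [hx] using (Complex.nonneg_iff.mp (hnn y)).1
  have him0 : (fun y => (F y).im) = fun _ => 0 :=
    funext fun y => (Complex.nonneg_iff.mp (hnn y)).2.symm
  rw [him0] at him
  exact Complex.ext (hmin.hasDerivAt_eq_zero hre) (him.unique (hasDerivAt_const x 0))

namespace Complex

lemma mul_conj_eq_one_of_norm_eq_one {z : ℂ} (hz : ‖z‖ = 1) : z * conj z = 1 := by
  rw [mul_conj', hz, ofReal_one, one_pow]

lemma conj_ne_zero {z : ℂ} (hz : z ≠ 0) : conj z ≠ 0 := star_ne_zero.mpr hz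

lemma inv_conj_eq_self_iff {r : ℂ} (hr : r ≠ 0) : (conj r)⁻¹ = r ↔ ‖r‖ = 1 := by
  rw [← mul_eq_one_iff_inv_eq₀ (conj_ne_zero hr), mul_comm, mul_conj', ← ofReal_pow,
    ofReal_eq_one, pow_eq_one_iff_of_nonneg (norm_nonneg r) two_ne_zero]

lemma setOf_norm_eq_one_infinite : {z : ℂ | ‖z‖ = 1}.Infinite := by
  have hinj : Set.InjOn (fun θ : ℝ => exp (θ * I)) (Set.Ioo 0 Real.pi) := fun a ha b hb hab =>
    Real.injOn_cos (Set.Ioo_subset_Icc_self ha) (Set.Ioo_subset_Icc_self hb) <| by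
      simpa only [exp_ofReal_mul_I_re] using congrArg re hab
  refine ((Set.Ioo_infinite Real.pi_pos).image hinj).mono ?_
  rintro _ ⟨θ, -, rfl⟩
  exact norm_exp_ofReal_mul_I θ

lemma nonneg_of_forall_ne_of_continuous {f : ℂ → ℂ} (hf : Continuous f) {r : ℂ}
    (hr : ‖r‖ = 1) (h : ∀ z : ℂ, ‖z‖ = 1 → z ≠ r → 0 ≤ f z) : 0 ≤ f r := by
  have hlim : Filter.Tendsto (fun θ : ℝ => r * exp (θ * I)) (nhdsWithin 0 (Set.Ioi 0))
      (nhds r) := by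
    have : Continuous fun θ : ℝ => r * exp (θ * I) := by fun_prop
    simpa using (this.tendsto 0).mono_left nhdsWithin_le_nhds
  refine isClosed_Ici.mem_of_tendsto ((hf.tendsto r).comp hlim) ?_
  filter_upwards [Ioo_mem_nhdsGT Real.pi_pos] with θ hθ
  refine h _ (by simp [hr, norm_exp_ofReal_mul_I]) fun hθr => ?_
  -- `exp (θ I) ≠ 1` because its imaginary part `sin θ` is positive
  have h1 : exp (θ * I) = 1 := by
    simpa [norm_ne_zero_iff.mp (hr.trans_ne one_ne_zero)] using hθr
  have := congrArg im h1
  rw [exp_ofReal_mul_I_im, one_im] at this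
  exact (Real.sin_pos_of_pos_of_lt_pi hθ.1 hθ.2).ne' this

end Complex

namespace Polynomial

noncomputable def conjReflect (N : ℕ) (p : ℂ[X]) : ℂ[X] := (p.map (starRingEnd ℂ)).reflect N

lemma coeff_conjReflect (N : ℕ) (p : ℂ[X]) (i : ℕ) :
    (conjReflect N p).coeff i = conj (p.coeff (revAt N i)) := by
  rw [conjReflect, coeff_reflect, coeff_map]

lemma natDegree_conjReflect_le {N : ℕ} {p : ℂ[X]} (hp : p.natDegree ≤ N) :
    (conjReflect N p).natDegree ≤ N :=
  natDegree_reflect_le.trans (max_le le_rfl (natDegree_map_le.trans hp))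

lemma eval_conjReflect {N : ℕ} {p : ℂ[X]} (hp : p.natDegree ≤ N) {x : ℂ} (hx : x ≠ 0) :
    (conjReflect N p).eval x = x ^ N * conj (p.eval (conj x)⁻¹) := by
  let : Invertible x⁻¹ := invertibleOfNonzero (inv_ne_zero hx)
  have h := eval₂_reflect_mul_pow (RingHom.id ℂ) x⁻¹ N (p.map (starRingEnd ℂ))
    (natDegree_map_le.trans hp)
  rw [invOf_eq_inv, inv_inv, ← eval, ← eval, eval_map] at h
  rw [← eval₂_at_apply, map_inv₀, Complex.conj_conj, ← h, conjReflect, mul_left_comm, ← mul_pow,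
    mul_inv_cancel₀ hx, one_pow, mul_one]

lemma eval_conjReflect_of_norm_eq_one {N : ℕ} {p : ℂ[X]} (hp : p.natDegree ≤ N) {z : ℂ}
    (hz : ‖z‖ = 1) : (conjReflect N p).eval z = z ^ N * conj (p.eval z) := by
  have hz0 : z ≠ 0 := norm_ne_zero_iff.mp (hz.trans_ne one_ne_zero)
  rw [eval_conjReflect hp hz0, (Complex.inv_conj_eq_self_iff hz0).mpr hz]

lemma IsRoot.inv_conj_of_conjReflect_eq_self {N : ℕ} {A : ℂ[X]} (hA : conjReflect N A = A)
    (hdeg : A.natDegree ≤ N) {r : ℂ} (hr : A.IsRoot r) (hr0 : r ≠ 0) :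
    A.IsRoot (conj r)⁻¹ := by
  have h := eval_conjReflect hdeg (inv_ne_zero (Complex.conj_ne_zero hr0))
  rw [hA] at h
  rw [IsRoot, h, map_inv₀, Complex.conj_conj, inv_inv, hr.eq_zero, map_zero, mul_zero]

/-- `0 ≤ w` in `ComplexOrder` means that `w` is a nonnegative real, so this says that
`A(z) = z ^ d T(z)` on the unit circle for a nonnegative trigonometric polynomial `T`. -/
def NonnegOnCircle (d : ℕ) (A : ℂ[X]) : Prop :=
  ∀ z : ℂ, ‖z‖ = 1 → 0 ≤ A.eval z * conj z ^ d

lemma NonnegOnCircle.conjReflect_eq_self {d : ℕ} {A : ℂ[X]} (hA : NonnegOnCircle d A)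
    (hdeg : A.natDegree ≤ 2 * d) : conjReflect (2 * d) A = A := by
  refine eq_of_infinite_eval_eq _ _ (Complex.setOf_norm_eq_one_infinite.mono fun z hz => ?_)
  have hreal : conj (A.eval z * conj z ^ d) = A.eval z * conj z ^ d :=
    (IsSelfAdjoint.of_nonneg (hA z hz)).star_eq
  have hzd : (z * conj z) ^ d = 1 := by rw [Complex.mul_conj_eq_one_of_norm_eq_one hz, one_pow]
  rw [map_mul, map_pow, Complex.conj_conj] at hreal
  show (conjReflect (2 * d) A).eval z = A.eval z
  rw [eval_conjReflect_of_norm_eq_one hdeg hz]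
  linear_combination z ^ d * hreal + A.eval z * hzd

lemma NonnegOnCircle.coeff_two_mul {d : ℕ} {A : ℂ[X]} (hA : NonnegOnCircle d A)
    (hdeg : A.natDegree ≤ 2 * d) : A.coeff (2 * d) = conj (A.coeff 0) := by
  conv_lhs => rw [← hA.conjReflect_eq_self hdeg]
  rw [coeff_conjReflect, revAt_le le_rfl, Nat.sub_self]

lemma NonnegOnCircle.isRoot_derivative {d : ℕ} {A : ℂ[X]} (hA : NonnegOnCircle d A) {r : ℂ}
    (hr : ‖r‖ = 1) (hroot : A.IsRoot r) : A.derivative.IsRoot r := by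
  set z : ℝ → ℂ := fun θ => r * Complex.exp (θ * Complex.I)
  have hz : HasDerivAt z (r * Complex.I) 0 := by
    simpa [z] using ((hasDerivAt_id (0 : ℝ)).ofReal_comp.mul_const Complex.I).cexp.const_mul r
  have hF := ((A.hasDerivAt (z 0)).comp 0 hz).mul (hz.star.pow d)
  have h := hF.eq_zero_of_forall_nonneg (by simp [z, hroot.eq_zero])
    fun θ => hA _ (by simp [z, hr, Complex.norm_exp_ofReal_mul_I])
  have hr0 : r ≠ 0 := norm_ne_zero_iff.mp (hr.trans_ne one_ne_zero)
  simpa [z, hroot.eq_zero, hr0] using h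

lemma NonnegOnCircle.of_X_mul {d : ℕ} {B : ℂ[X]} (h : NonnegOnCircle (d + 1) (X * B)) :
    NonnegOnCircle d B := fun z hz => by
  convert h z hz using 1
  rw [eval_mul, eval_X, pow_succ]
  linear_combination (-(B.eval z * conj z ^ d)) * Complex.mul_conj_eq_one_of_norm_eq_one hz

lemma NonnegOnCircle.natDegree_le_of_X_mul {d : ℕ} {B : ℂ[X]}
    (h : NonnegOnCircle (d + 1) (X * B)) (hdeg : (X * B).natDegree ≤ 2 * (d + 1)) :
    B.natDegree ≤ 2 * d := natDegree_le_iff_coeff_eq_zero.mpr fun k hk => by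
  rw [← coeff_X_mul]
  rcases (show 2 * d + 1 ≤ k by omega).eq_or_lt with rfl | hk
  · rw [show 2 * d + 1 + 1 = 2 * (d + 1) by ring, h.coeff_two_mul hdeg, coeff_X_mul_zero, map_zero]
  · exact coeff_eq_zero_of_natDegree_lt (by omega)

noncomputable def circleFactor (r : ℂ) : ℂ[X] := C (-conj r) * ((X - C r) * (X - C (conj r)⁻¹))

lemma natDegree_circleFactor {r : ℂ} (hr : r ≠ 0) : (circleFactor r).natDegree = 2 := by
  rw [circleFactor, natDegree_C_mul (neg_ne_zero.mpr (Complex.conj_ne_zero hr)),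
    (monic_X_sub_C r).natDegree_mul (monic_X_sub_C _), natDegree_X_sub_C, natDegree_X_sub_C]

lemma circleFactor_dvd_iff {r : ℂ} (hr : r ≠ 0) {A : ℂ[X]} :
    circleFactor r ∣ A ↔ (X - C r) * (X - C (conj r)⁻¹) ∣ A :=
  (isUnit_C.mpr (neg_ne_zero.mpr (Complex.conj_ne_zero hr)).isUnit).mul_left_dvd

lemma eval_circleFactor_mul_conj {r z : ℂ} (hr : r ≠ 0) (hz : ‖z‖ = 1) :
    (circleFactor r).eval z * conj z = (‖z - r‖ : ℂ) ^ 2 := by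
  have hzz := Complex.mul_conj_eq_one_of_norm_eq_one hz
  have hrr : conj r * (conj r)⁻¹ = 1 := mul_inv_cancel₀ (Complex.conj_ne_zero hr)
  simp only [circleFactor, eval_mul, eval_sub, eval_C, eval_X]
  rw [← Complex.mul_conj', map_sub]
  linear_combination (-(z - r) * conj r) * hzz + ((z - r) * conj z) * hrr

lemma eval_circleFactor_mul_mul_conj_pow {r z : ℂ} (hr : r ≠ 0) (hz : ‖z‖ = 1) (d : ℕ)
    (B : ℂ[X]) : (circleFactor r * B).eval z * conj z ^ (d + 1) =
      (‖z - r‖ : ℂ) ^ 2 * (B.eval z * conj z ^ d) := by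
  rw [eval_mul, ← eval_circleFactor_mul_conj hr hz, pow_succ]
  ring

lemma NonnegOnCircle.exists_circleFactor_dvd {d : ℕ} {A : ℂ[X]}
    (hA : NonnegOnCircle (d + 1) A) (hdeg : A.natDegree ≤ 2 * (d + 1)) (h0 : A.eval 0 ≠ 0) :
    ∃ r ≠ 0, circleFactor r ∣ A := by
  have hA0 : A ≠ 0 := by rintro rfl; exact h0 eval_zero
  have hcoeff : A.coeff (2 * (d + 1)) ≠ 0 := by
    rw [hA.coeff_two_mul hdeg, coeff_zero_eq_eval_zero]
    exact Complex.conj_ne_zero h0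
  have hpos : 0 < A.degree := natDegree_pos_iff_degree_pos.mp
    ((by omega : 0 < 2 * (d + 1)).trans_le (le_natDegree_of_ne_zero hcoeff))
  obtain ⟨r, hroot⟩ := Complex.exists_root hpos
  have hr0 : r ≠ 0 := by rintro rfl; exact h0 hroot
  refine ⟨r, hr0, (circleFactor_dvd_iff hr0).mpr ?_⟩
  by_cases hr : ‖r‖ = 1
  · rw [(Complex.inv_conj_eq_self_iff hr0).mpr hr, ← sq, ← le_rootMultiplicity_iff hA0]
    exact (one_lt_rootMultiplicity_iff_isRoot hA0).mpr ⟨hroot, hA.isRoot_derivative hr hroot⟩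
  · have hne : r - (conj r)⁻¹ ≠ 0 :=
      sub_ne_zero.mpr fun h => hr ((Complex.inv_conj_eq_self_iff hr0).mp h.symm)
    exact (isCoprime_X_sub_C_of_isUnit_sub hne.isUnit).mul_dvd (dvd_iff_isRoot.mpr hroot)
      (dvd_iff_isRoot.mpr (hroot.inv_conj_of_conjReflect_eq_self
        (hA.conjReflect_eq_self hdeg) hdeg hr0))

lemma NonnegOnCircle.of_circleFactor_mul {d : ℕ} {r : ℂ} {B : ℂ[X]} (hr : r ≠ 0)
    (h : NonnegOnCircle (d + 1) (circleFactor r * B)) : NonnegOnCircle d B := by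
  have hne : ∀ z : ℂ, ‖z‖ = 1 → z ≠ r → 0 ≤ B.eval z * conj z ^ d := fun z hz hzr => by
    have hpos : (0 : ℂ) < (‖z - r‖ : ℂ) ^ 2 := by
      exact_mod_cast pow_pos (norm_pos_iff.mpr (sub_ne_zero.mpr hzr)) 2
    have hAz := h z hz
    rw [eval_circleFactor_mul_mul_conj_pow hr hz] at hAz
    simpa [hpos.ne'] using mul_nonneg (inv_pos.mpr hpos).le hAz
  intro z hz
  rcases eq_or_ne z r with rfl | hzr
  · exact Complex.nonneg_of_forall_ne_of_continuous
      (f := fun w => B.eval w * conj w ^ d) (by fun_prop) hz hne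
  · exact hne z hz hzr

theorem NonnegOnCircle.exists_eq_norm_sq {d : ℕ} {A : ℂ[X]} (hA : NonnegOnCircle d A)
    (hdeg : A.natDegree ≤ 2 * d) : ∃ Q : ℂ[X], Q.natDegree ≤ d ∧
      ∀ z : ℂ, ‖z‖ = 1 → A.eval z * conj z ^ d = (‖Q.eval z‖ : ℂ) ^ 2 := by
  induction d generalizing A with
  | zero =>
    obtain ⟨t, ht, htA⟩ := RCLike.nonneg_iff_exists_ofReal.mp (hA 1 (by simp))
    refine ⟨C (√t : ℂ), by simp, fun z hz => ?_⟩
    rw [eq_C_of_natDegree_le_zero hdeg] at htA ⊢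
    simp only [Complex.coe_algebraMap, eval_C, pow_zero, mul_one, Complex.norm_real,
      Real.norm_eq_abs] at htA ⊢
    rw [← htA, abs_of_nonneg (Real.sqrt_nonneg t)]
    exact_mod_cast (Real.sq_sqrt ht).symm
  | succ d ih =>
    by_cases h0 : A.eval 0 = 0
    · obtain ⟨B, rfl⟩ := X_dvd_iff.mpr (coeff_zero_eq_eval_zero A ▸ h0)
      obtain ⟨Q, hQdeg, hQ⟩ := ih hA.of_X_mul (hA.natDegree_le_of_X_mul hdeg)
      refine ⟨Q, hQdeg.trans d.le_succ, fun z hz => ?_⟩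
      rw [← hQ z hz, eval_mul, eval_X, pow_succ]
      linear_combination (B.eval z * conj z ^ d) * Complex.mul_conj_eq_one_of_norm_eq_one hz
    · obtain ⟨r, hr, B, rfl⟩ := hA.exists_circleFactor_dvd hdeg h0
      have hB0 : B ≠ 0 := by rintro rfl; simp at h0
      have hBdeg : B.natDegree ≤ 2 * d := by
        rw [natDegree_mul (ne_zero_of_natDegree_gt (n := 0)
          (by rw [natDegree_circleFactor hr]; norm_num)) hB0, natDegree_circleFactor hr] at hdeg
        omega
      obtain ⟨Q, hQdeg, hQ⟩ := ih (hA.of_circleFactor_mul hr) hBdeg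
      refine ⟨(X - C r) * Q, natDegree_mul_le.trans (by rw [natDegree_X_sub_C]; omega),
        fun z hz => ?_⟩
      rw [eval_circleFactor_mul_mul_conj_pow hr hz, hQ z hz, eval_mul, eval_sub, eval_X, eval_C,
        norm_mul]
      push_cast
      ring

lemma eval_X_pow_sub_mul_conjReflect_mul_conj_pow {d : ℕ} {P : ℂ[X]} (hP : P.natDegree ≤ d)
    {z : ℂ} (hz : ‖z‖ = 1) :
    (X ^ d - P * conjReflect d P).eval z * conj z ^ d = 1 - (‖P.eval z‖ : ℂ) ^ 2 := by
  have hzd : (z * conj z) ^ d = 1 := by rw [Complex.mul_conj_eq_one_of_norm_eq_one hz, one_pow]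
  rw [eval_sub, eval_pow, eval_X, eval_mul, eval_conjReflect_of_norm_eq_one hP hz,
    ← Complex.mul_conj']
  linear_combination (1 - P.eval z * conj (P.eval z)) * hzd

end Polynomial

/-- Completion lemma: for any polynomial `P ∈ ℂ[x]` of degree `d` with `|P(x)|² ≤ 1`
on the unit circle, there exists `Q ∈ ℂ[x]` with `deg Q ≤ d` such that
`|P(x)|² + |Q(x)|² = 1` on the unit circle. -/
theorem stmt_13 (P : Polynomial ℂ)
    (hP : ∀ x : ℂ, ‖x‖ = 1 → ‖P.eval x‖ ^ 2 ≤ 1) :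
    ∃ Q : Polynomial ℂ, Q.natDegree ≤ P.natDegree ∧
      ∀ x : ℂ, ‖x‖ = 1 →
        ‖P.eval x‖ ^ 2 + ‖Q.eval x‖ ^ 2 = 1 := by
  set A := X ^ P.natDegree - P * conjReflect P.natDegree P
  have hA : NonnegOnCircle P.natDegree A := fun z hz => by
    rw [eval_X_pow_sub_mul_conjReflect_mul_conj_pow le_rfl hz]
    exact_mod_cast Complex.zero_le_real.mpr (sub_nonneg.mpr (hP z hz))
  have hdeg : A.natDegree ≤ 2 * P.natDegree :=
    (natDegree_sub_le _ _).trans <| max_le (by rw [natDegree_X_pow]; omega) <|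
      natDegree_mul_le.trans (by have := natDegree_conjReflect_le (le_refl P.natDegree); omega)
  obtain ⟨Q, hQdeg, hQ⟩ := hA.exists_eq_norm_sq hdeg
  refine ⟨Q, hQdeg, fun x hx => ?_⟩
  have h := hQ x hx
  rw [eval_X_pow_sub_mul_conjReflect_mul_conj_pow le_rfl hx] at h
  have h' : 1 - ‖P.eval x‖ ^ 2 = ‖Q.eval x‖ ^ 2 := by exact_mod_cast h
  linarith
end
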